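/- For the nets N_n (pipeline with t₁ deleted), the directed homology groups satisfy H_k^ε(N_n) = 0 for k > 0 and H₀^ε(N_n) ≅ ℤ, for both ε ∈ {0,1}. -/

import Mathlib

/-! Concrete pipeline Petri nets. States of a net with `m` places are `Fin m → Bool`. -/

/-- The "tail" pipeline net `N` with `m` places `p₁,…,p_m` (0-indexed `0,…,m-1`) and `m`
events `t₂,…,t_{m+1}` (0-indexed: event `j` is `t_{j+2}` with `pre = {p_{j+1}}`, i.e. place
`j`, and `post = {p_{j+2}}`, i.e. place `j+1`, when `j+1 < m`, and `post = ∅` for the last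
event).  `stepT m s e` is the partial firing of event `e` at state `s`. -/
def stepT (m : ℕ) (s : Fin m → Bool) (e : Fin m) : Option (Fin m → Bool) :=
  if s e = true then
    if h : (e : ℕ) + 1 < m then
      if s ⟨(e : ℕ) + 1, h⟩ = false then
        some (Function.update (Function.update s e false) ⟨(e : ℕ) + 1, h⟩ true)
      else none
    else some (Function.update s e false)
  else none

/-- Firing a word (list) of events, `s · (a :: l) = (s · a) · l`. -/
def stepsT (m : ℕ) : (Fin m → Bool) → List (Fin m) → Option (Fin m → Bool)
  | s, [] => some s
  | s, a :: l => (stepT m s a).bind fun s' => stepsT m s' l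

/-- Resources (`pre ∪ post`, as a set of 0-indexed places) of event `e` of the tail net. -/
def resT (m : ℕ) (e : Fin m) : Set ℕ :=
  {x | x = (e : ℕ) ∨ (x = (e : ℕ) + 1 ∧ (e : ℕ) + 1 < m)}

/-- Independence of events of the tail net: disjoint resources. -/
def indepT (m : ℕ) (a b : Fin m) : Prop :=
  ∀ x, ¬(x ∈ resT m a ∧ x ∈ resT m b)

/-- One swap of adjacent independent letters in a word. -/
inductive TraceStep {E : Type} (r : E → E → Prop) : List E → List E → Prop
  | swap (u v : List E) (a b : E) : r a b →
      TraceStep r (u ++ a :: b :: v) (u ++ b :: a :: v)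

/-- Trace equivalence: two words represent the same element of the trace monoid `M(E,I)`
iff they are related by the equivalence closure of adjacent swaps of independent letters. -/
def TraceEquiv {E : Type} (r : E → E → Prop) : List E → List E → Prop :=
  Relation.EqvGen (TraceStep r)

open CategoryTheory CategoryTheory.Limits

theorem stepsT_append (m : ℕ) (x : Fin m → Bool) (l l' : List (Fin m)) :
    stepsT m x (l ++ l') = (stepsT m x l).bind fun s => stepsT m s l' := by
  induction l generalizing x with
  | nil => simp [stepsT]
  | cons a l ih =>
    simp only [List.cons_append, stepsT]
    cases stepT m x a <;> simp [ih]

theorem TraceEquiv.append_left {E : Type} (r : E → E → Prop) (u : List E)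
    {l₁ l₂ : List E} (h : TraceEquiv r l₁ l₂) : TraceEquiv r (u ++ l₁) (u ++ l₂) := by
  induction h with
  | rel a b hab =>
    cases hab with
    | swap u0 v x y hxy =>
      refine Relation.EqvGen.rel _ _ ?_
      rw [← List.append_assoc, ← List.append_assoc]
      exact TraceStep.swap (u ++ u0) v x y hxy
  | refl a => exact Relation.EqvGen.refl _
  | symm a b _ ih => exact Relation.EqvGen.symm _ _ ih
  | trans a b c _ _ ih1 ih2 => exact Relation.EqvGen.trans _ _ _ ih1 ih2

theorem TraceEquiv.append_right {E : Type} (r : E → E → Prop) (u : List E)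
    {l₁ l₂ : List E} (h : TraceEquiv r l₁ l₂) : TraceEquiv r (l₁ ++ u) (l₂ ++ u) := by
  induction h with
  | rel a b hab =>
    cases hab with
    | swap u0 v x y hxy =>
      refine Relation.EqvGen.rel _ _ ?_
      rw [List.append_assoc, List.append_assoc]
      exact TraceStep.swap u0 (v ++ u) x y hxy
  | refl a => exact Relation.EqvGen.refl _
  | symm a b _ ih => exact Relation.EqvGen.symm _ _ ih
  | trans a b c _ _ ih1 ih2 => exact Relation.EqvGen.trans _ _ _ ih1 ih2

theorem TraceEquiv.append {E : Type} (r : E → E → Prop)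
    {l₁ l₂ l₁' l₂' : List E} (h : TraceEquiv r l₁ l₂) (h' : TraceEquiv r l₁' l₂') :
    TraceEquiv r (l₁ ++ l₁') (l₂ ++ l₂') :=
  Relation.EqvGen.trans _ _ _ (TraceEquiv.append_right r l₁' h)
    (TraceEquiv.append_left r l₂ h')

theorem TraceEquiv.length_eq {E : Type} (r : E → E → Prop) {l₁ l₂ : List E}
    (h : TraceEquiv r l₁ l₂) : l₁.length = l₂.length := by
  induction h with
  | rel a b hab => cases hab with | swap u v x y _ => simp
  | refl a => rfl
  | symm a b _ ih => omega
  | trans a b c _ _ ih1 ih2 => omega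

/-- Objects of the state category `K(S)` of the net `N_n` (with `m = n-1` places and
events): the states. -/
structure StN (m : ℕ) : Type where
  s : Fin m → Bool

/-- Morphisms `x → y` are traces: words `l` with `x·l = y`, modulo trace equivalence. -/
def homSetoid (m : ℕ) (x y : StN m) :
    Setoid {l : List (Fin m) // stepsT m x.s l = some y.s} where
  r l₁ l₂ := TraceEquiv (indepT m) l₁.1 l₂.1
  iseqv := ⟨fun l => Relation.EqvGen.refl l.1,
    fun h => Relation.EqvGen.symm _ _ h,
    fun h h' => Relation.EqvGen.trans _ _ _ h h'⟩

/-- The state category `K(S)` of the net `N_n`: objects are states, morphisms are traces,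
composition is concatenation of words. -/
instance (m : ℕ) : Category (StN m) where
  Hom x y := Quotient (homSetoid m x y)
  id x := Quotient.mk _ ⟨[], rfl⟩
  comp {x y z} f g := Quotient.liftOn₂ f g
    (fun l l' => Quotient.mk _ ⟨l.1 ++ l'.1, by
      rw [stepsT_append, l.2]; exact l'.2⟩)
    (fun a b a' b' ha hb => Quotient.sound (TraceEquiv.append _ ha hb))
  id_comp f := Quotient.inductionOn f fun l => rfl
  comp_id f := Quotient.inductionOn f fun l => Quotient.sound (by
    show TraceEquiv _ (l.1 ++ []) l.1
    rw [List.append_nil]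
    exact Relation.EqvGen.refl _)
  assoc f g h := Quotient.inductionOn₃ f g h fun a b c => Quotient.sound (by
    show TraceEquiv _ ((a.1 ++ b.1) ++ c.1) (a.1 ++ (b.1 ++ c.1))
    rw [List.append_assoc]
    exact Relation.EqvGen.refl _)

/-- Whether a morphism of the state category is the identity trace `1`. -/
def isIdTrace (m : ℕ) {x y : StN m} (f : x ⟶ y) : Prop :=
  ∃ p : {l : List (Fin m) // stepsT m x.s l = some y.s},
    f = Quotient.mk _ p ∧ p.1 = []

theorem isIdTrace_mk (m : ℕ) {x y : StN m}
    (l : {l : List (Fin m) // stepsT m x.s l = some y.s}) :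
    isIdTrace m (Quotient.mk (homSetoid m x y) l) ↔ l.1 = [] := by
  constructor
  · rintro ⟨p, hp, hp0⟩
    have := Quotient.exact hp
    have hlen := TraceEquiv.length_eq _ this
    rw [hp0] at hlen
    simpa using List.length_eq_zero_iff.mp (by simpa using hlen)
  · intro h0
    exact ⟨l, rfl, h0⟩

theorem comp_mk (m : ℕ) {x y z : StN m}
    (a : {l : List (Fin m) // stepsT m x.s l = some y.s})
    (b : {l : List (Fin m) // stepsT m y.s l = some z.s})
    (h : stepsT m x.s (a.1 ++ b.1) = some z.s) :
    (Quotient.mk (homSetoid m x y) a ≫ Quotient.mk (homSetoid m y z) b) =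
      (show x ⟶ z from Quotient.mk (homSetoid m x z) ⟨a.1 ++ b.1, h⟩) := rfl

theorem isIdTrace_comp (m : ℕ) {x y z : StN m} (a : x ⟶ y) (b : y ⟶ z) :
    isIdTrace m (a ≫ b) ↔ (isIdTrace m a ∧ isIdTrace m b) := by
  induction a using Quotient.inductionOn with
  | h a =>
  induction b using Quotient.inductionOn with
  | h b =>
  rw [comp_mk m a b (by rw [stepsT_append, a.2]; exact b.2)]
  show isIdTrace m (Quotient.mk (homSetoid m x z) ⟨a.1 ++ b.1, _⟩) ↔ _
  rw [isIdTrace_mk, isIdTrace_mk, isIdTrace_mk]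
  simp

open scoped Classical in
/-- The functor `Δ⁰ℤ : K(S) → Ab`: constant value `ℤ` on objects, a morphism `μ` acts as
the identity if `μ = 1` and as `0` otherwise. -/
noncomputable def Delta0 (m : ℕ) : StN m ⥤ AddCommGrpCat.{0} where
  obj _ := AddCommGrpCat.of ℤ
  map {x y} f := if isIdTrace m f then 𝟙 (AddCommGrpCat.of ℤ) else 0
  map_id x := by
    have h : isIdTrace m (𝟙 x) := ⟨⟨[], rfl⟩, rfl, rfl⟩
    show (if isIdTrace m (𝟙 x) then 𝟙 (AddCommGrpCat.of ℤ) else 0) = 𝟙 (AddCommGrpCat.of ℤ)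
    rw [if_pos h]
  map_comp {x y z} f g := by
    show (if isIdTrace m (f ≫ g) then 𝟙 (AddCommGrpCat.of ℤ) else 0)
        = (if isIdTrace m f then 𝟙 (AddCommGrpCat.of ℤ) else 0) ≫
          (if isIdTrace m g then 𝟙 (AddCommGrpCat.of ℤ) else 0)
    by_cases ha : isIdTrace m f <;> by_cases hb : isIdTrace m g <;>
      simp [isIdTrace_comp, ha, hb]

open scoped Classical in
/-- The functor `Δ¹ℤ : K(S)^op → Ab`. -/
noncomputable def Delta1 (m : ℕ) : (StN m)ᵒᵖ ⥤ AddCommGrpCat.{0} where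
  obj _ := AddCommGrpCat.of ℤ
  map {x y} f := if isIdTrace m f.unop then 𝟙 (AddCommGrpCat.of ℤ) else 0
  map_id x := by
    have h : isIdTrace m (𝟙 x).unop := ⟨⟨[], rfl⟩, rfl, rfl⟩
    show (if isIdTrace m (𝟙 x).unop then 𝟙 (AddCommGrpCat.of ℤ) else 0) = 𝟙 (AddCommGrpCat.of ℤ)
    rw [if_pos h]
  map_comp {x y z} f g := by
    show (if isIdTrace m (f ≫ g).unop then 𝟙 (AddCommGrpCat.of ℤ) else 0)
        = (if isIdTrace m f.unop then 𝟙 (AddCommGrpCat.of ℤ) else 0) ≫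
          (if isIdTrace m g.unop then 𝟙 (AddCommGrpCat.of ℤ) else 0)
    have : (f ≫ g).unop = g.unop ≫ f.unop := rfl
    rw [this]
    by_cases ha : isIdTrace m f.unop <;> by_cases hb : isIdTrace m g.unop <;>
      simp [isIdTrace_comp, ha, hb]

/-!
The state category of `N_n` is thin with a terminal and an initial object, which settles both
homologies: over a category with a terminal object `T` the colimit functor is evaluation at `T`,
an exact functor, so its higher left derived functors vanish and `colim Δℤ = Δℤ(T) = ℤ`; for
`Δ¹ℤ` on `K(S)ᵒᵖ` the initial object of `K(S)` becomes terminal.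

Thinness: firing `e` lowers the number of tokens on the places `≤ e` by one and no other event
changes it, so every firing sequence from `s` to `s'` fires each event the same number of times.
Two distinct events enabled at the same state are independent and commute, so the first event of
one sequence can be moved to the front of the other, and induction gives trace equivalence.
The empty marking is reachable from every state by firing the rightmost token, which lowers
`∑ (m - j)` over the marked places `j`; complementing markings reverses firings, so every state
is reachable from the full marking.
-/

namespace CategoryTheory

variable {C D : Type*} [Category C] [Category D] [Abelian C] [Abelian D]
  [HasProjectiveResolutions C]

noncomputable def Iso.leftDerived {F G : C ⥤ D} [F.Additive] [G.Additive] (e : F ≅ G) (n : ℕ) :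
    F.leftDerived n ≅ G.leftDerived n where
  hom := NatTrans.leftDerived e.hom n
  inv := NatTrans.leftDerived e.inv n
  hom_inv_id := by rw [← NatTrans.leftDerived_comp, e.hom_inv_id, NatTrans.leftDerived_id]
  inv_hom_id := by rw [← NatTrans.leftDerived_comp, e.inv_hom_id, NatTrans.leftDerived_id]

theorem Functor.isZero_leftDerived_obj_succ_of_preservesHomology (F : C ⥤ D) [F.Additive]
    [F.PreservesHomology] (n : ℕ) (X : C) : IsZero ((F.leftDerived (n + 1)).obj X) := by
  let P : ProjectiveResolution X := (HasProjectiveResolution.out (Z := X)).some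
  refine IsZero.of_iso ?_ (P.isoLeftDerivedObj F (n + 1))
  rw [HomologicalComplex.homologyFunctor_obj, ← HomologicalComplex.exactAt_iff_isZero_homology,
    HomologicalComplex.exactAt_iff]
  exact ((HomologicalComplex.exactAt_iff _ _).mp (P.complex_exactAt_succ n)).map F

end CategoryTheory

namespace CategoryTheory.Limits

variable {J : Type*} [Category J] {C : Type*} [Category C] [HasColimitsOfShape J C]
  {T : J} (hT : IsTerminal T)

include hT in
theorem isIso_colimι_of_isTerminal : IsIso (colim.ι (C := C) T) :=
  have (F : J ⥤ C) : IsIso ((colim.ι T).app F) := isIso_ι_of_isTerminal hT F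
  NatIso.isIso_of_isIso_app _

noncomputable def colimIsoEvaluationOfIsTerminal :
    (colim : (J ⥤ C) ⥤ C) ≅ (evaluation J C).obj T :=
  haveI := isIso_colimι_of_isTerminal (C := C) hT
  (asIso (colim.ι T)).symm

include hT in
theorem isZero_colim_leftDerived_obj_of_isTerminal [Abelian C]
    [HasProjectiveResolutions (J ⥤ C)] (F : J ⥤ C) (k : ℕ) :
    IsZero ((colim.leftDerived (k + 1)).obj F) :=
  (((evaluation J C).obj T).isZero_leftDerived_obj_succ_of_preservesHomology k F).of_iso
    (((colimIsoEvaluationOfIsTerminal hT).leftDerived _).app F)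

end CategoryTheory.Limits

section PipelineNet

variable {m : ℕ}

theorem stepT_eq_some_iff {s t : Fin m → Bool} {e : Fin m} :
    stepT m s e = some t ↔ s e = true ∧ (∀ h : (e : ℕ) + 1 < m, s ⟨e + 1, h⟩ = false) ∧
      ∀ x : Fin m, t x = if (x : ℕ) = e then false else if (x : ℕ) = e + 1 then true else s x := by
  unfold stepT
  split_ifs with h1 h2 h3
  · simp only [Option.some_inj, funext_iff, Function.update_apply, Fin.ext_iff, h1, h3,
      implies_true, true_and]
    refine forall_congr' fun x => ?_
    split_ifs <;> first | exact eq_comm | omega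
  · simp only [false_iff, not_and]
    exact fun _ h => absurd (h h2) h3
  · simp only [Option.some_inj, funext_iff, Function.update_apply, Fin.ext_iff, h1, h2,
      IsEmpty.forall_iff, true_and]
    refine forall_congr' fun x => ?_
    have := x.2
    split_ifs <;> first | exact eq_comm | omega
  · simp [h1]

theorem stepsT_cons_eq_some_iff {s t : Fin m → Bool} {a : Fin m} {l : List (Fin m)} :
    stepsT m s (a :: l) = some t ↔ ∃ s', stepT m s a = some s' ∧ stepsT m s' l = some t := by
  simp only [stepsT, Option.bind_eq_some_iff]

def tokenWeight (w : ℕ → ℤ) (s : Fin m → Bool) : ℤ :=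
  ∑ x, if s x then w x else 0

-- The last event moves its token to the virtual place `m`, which `hw` makes weightless.
theorem tokenWeight_of_stepT {w : ℕ → ℤ} (hw : w m = 0) {s t : Fin m → Bool} {e : Fin m}
    (h : stepT m s e = some t) : tokenWeight w s = tokenWeight w t + (w e - w (e + 1)) := by
  obtain ⟨he, hsucc, ht⟩ := stepT_eq_some_iff.1 h
  have hterm : ∀ x : Fin m, (if s x then w x else 0) = (if t x then w x else 0) +
      ((if x = e then w e else 0) - if (x : ℕ) = e + 1 then w x else 0) := by
    intro x
    by_cases hxe : x = e
    · subst hxe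
      simp [ht, he]
    have hxe' : (x : ℕ) ≠ e := fun h => hxe (Fin.ext h)
    by_cases hx1 : (x : ℕ) = e + 1
    · have hsx : s x = false := (congrArg s (Fin.ext hx1)).trans (hsucc (hx1 ▸ x.2))
      simp [ht, hxe, hx1, hsx]
    · simp [ht, hxe, hxe', hx1]
  have hsucc_sum : ∑ x : Fin m, (if (x : ℕ) = e + 1 then w x else 0) = w (e + 1) := by
    by_cases hlt : (e : ℕ) + 1 < m
    · have hx : ∀ x : Fin m, ((x : ℕ) = e + 1) = (x = ⟨e + 1, hlt⟩) :=
        fun x => propext (Fin.ext_iff (b := ⟨e + 1, hlt⟩)).symm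
      simp only [hx, Finset.sum_ite_eq', Finset.mem_univ, if_true]
    · rw [show (e : ℕ) + 1 = m by omega, hw]
      exact Finset.sum_eq_zero fun x _ => if_neg (by omega)
  simp only [tokenWeight, Finset.sum_congr rfl fun x _ => hterm x, Finset.sum_add_distrib,
    Finset.sum_sub_distrib, Finset.sum_ite_eq', Finset.mem_univ, if_true, hsucc_sum]

theorem tokenWeight_of_stepsT {w : ℕ → ℤ} (hw : w m = 0) {s t : Fin m → Bool}
    {l : List (Fin m)} (h : stepsT m s l = some t) :
    tokenWeight w s = tokenWeight w t + (l.map fun e : Fin m => w e - w (e + 1)).sum := by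
  induction l generalizing s with
  | nil =>
    obtain rfl : s = t := by simpa [stepsT] using h
    simp
  | cons a l ih =>
    obtain ⟨s', hs', hl⟩ := stepsT_cons_eq_some_iff.1 h
    rw [tokenWeight_of_stepT hw hs', ih hl, List.map_cons, List.sum_cons]
    ring

theorem count_eq_of_stepsT {s t : Fin m → Bool} {u v : List (Fin m)}
    (hu : stepsT m s u = some t) (hv : stepsT m s v = some t) (e : Fin m) :
    u.count e = v.count e := by
  have key {l : List (Fin m)} (hl : stepsT m s l = some t) :
      tokenWeight (fun x => if x ≤ e then 1 else 0) s =
        tokenWeight (fun x => if x ≤ e then 1 else 0) t + l.count e := by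
    have hdiff (a : Fin m) : ((if (a : ℕ) ≤ e then 1 else 0) -
        (if (a : ℕ) + 1 ≤ e then 1 else 0) : ℤ) = if a = e then 1 else 0 := by
      simp only [Fin.ext_iff]
      split_ifs <;> omega
    rw [tokenWeight_of_stepsT (if_neg (by omega)) hl]
    simp only [hdiff, List.sum_map_ite, List.map_const', List.sum_replicate, Int.nsmul_eq_mul,
      mul_one, nsmul_zero, add_zero, List.count_eq_length_filter, beq_eq_decide]
  have := (key hu).symm.trans (key hv)
  omega

theorem eq_nil_of_stepsT_eq_some_self {s : Fin m → Bool} {u : List (Fin m)}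
    (hu : stepsT m s u = some s) : u = [] :=
  List.eq_nil_iff_forall_not_mem.2 fun e he =>
    (List.count_pos_iff.2 he).ne' (count_eq_of_stepsT hu (rfl : stepsT m s [] = some s) e)

theorem val_ne_succ_of_stepT {s ta tb : Fin m → Bool} {a b : Fin m}
    (ha : stepT m s a = some ta) (hb : stepT m s b = some tb) : (a : ℕ) ≠ b + 1 := by
  intro hab
  have h1 := (stepT_eq_some_iff.1 ha).1
  have h2 := (stepT_eq_some_iff.1 hb).2.1 (hab ▸ a.2)
  rw [show (⟨b + 1, _⟩ : Fin m) = a from Fin.ext hab.symm] at h2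
  simp [h1] at h2

theorem indepT_of_stepT {s ta tb : Fin m → Bool} {a b : Fin m} (hab : a ≠ b)
    (ha : stepT m s a = some ta) (hb : stepT m s b = some tb) : indepT m a b := by
  have h₁ := val_ne_succ_of_stepT ha hb
  have h₂ := val_ne_succ_of_stepT hb ha
  have h₃ : (a : ℕ) ≠ b := Fin.val_ne_of_ne hab
  rintro x ⟨hxa | ⟨hxa, -⟩, hxb | ⟨hxb, -⟩⟩ <;> omega

theorem stepT_stepT_eq_some {s ta tb : Fin m → Bool} {a b : Fin m} (hab : a ≠ b)
    (ha : stepT m s a = some ta) (hb : stepT m s b = some tb) :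
    stepT m ta b = some fun x : Fin m => if (x : ℕ) = a ∨ (x : ℕ) = b then false
      else if (x : ℕ) = a + 1 ∨ (x : ℕ) = b + 1 then true else s x := by
  have h₁ := val_ne_succ_of_stepT ha hb
  have h₂ := val_ne_succ_of_stepT hb ha
  have h₃ : (a : ℕ) ≠ b := Fin.val_ne_of_ne hab
  obtain ⟨-, -, hta⟩ := stepT_eq_some_iff.1 ha
  obtain ⟨hb₁, hb₂, -⟩ := stepT_eq_some_iff.1 hb
  refine stepT_eq_some_iff.2 ⟨?_, fun h => ?_, fun x => ?_⟩
  · rw [hta, if_neg h₃.symm, if_neg h₂, hb₁]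
  · rw [hta, if_neg (by simp; omega), if_neg (by simp; omega), hb₂ h]
  · rw [hta]
    split_ifs <;> first | rfl | omega

theorem stepT_comm {s ta tb : Fin m → Bool} {a b : Fin m} (hab : a ≠ b)
    (ha : stepT m s a = some ta) (hb : stepT m s b = some tb) :
    ∃ r, stepT m ta b = some r ∧ stepT m tb a = some r :=
  ⟨_, stepT_stepT_eq_some hab ha hb,
    by simpa only [or_comm] using stepT_stepT_eq_some hab.symm hb ha⟩

theorem exists_traceEquiv_cons_of_mem {s t sb : Fin m → Bool} {b : Fin m} {u : List (Fin m)}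
    (hb : stepT m s b = some sb) (hu : stepsT m s u = some t) (hbu : b ∈ u) :
    ∃ w, stepsT m sb w = some t ∧ TraceEquiv (indepT m) u (b :: w) := by
  induction u generalizing s sb with
  | nil => simp at hbu
  | cons a u ih =>
    obtain ⟨sa, ha, hu⟩ := stepsT_cons_eq_some_iff.1 hu
    by_cases hab : a = b
    · subst hab
      obtain rfl : sa = sb := Option.some_injective _ (ha.symm.trans hb)
      exact ⟨u, hu, Relation.EqvGen.refl _⟩
    · obtain ⟨r, hr, hr'⟩ := stepT_comm hab ha hb
      obtain ⟨w, hw, huw⟩ := ih hr hu ((List.mem_cons.1 hbu).resolve_left (Ne.symm hab))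
      refine ⟨a :: w, stepsT_cons_eq_some_iff.2 ⟨r, hr', hw⟩, ?_⟩
      exact Relation.EqvGen.trans _ _ _ (TraceEquiv.append_left _ [a] huw)
        (Relation.EqvGen.rel _ _ (TraceStep.swap [] w a b (indepT_of_stepT hab ha hb)))

theorem traceEquiv_of_stepsT_eq_some {s t : Fin m → Bool} {u v : List (Fin m)}
    (hu : stepsT m s u = some t) (hv : stepsT m s v = some t) : TraceEquiv (indepT m) u v := by
  induction v generalizing s u with
  | nil =>
    obtain rfl : s = t := by simpa [stepsT] using hv
    rw [eq_nil_of_stepsT_eq_some_self hu]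
    exact Relation.EqvGen.refl _
  | cons b v ih =>
    obtain ⟨sb, hb, hv'⟩ := stepsT_cons_eq_some_iff.1 hv
    have hbu : b ∈ u := List.count_pos_iff.1 (by rw [count_eq_of_stepsT hu hv b]; simp)
    obtain ⟨w, hw, huw⟩ := exists_traceEquiv_cons_of_mem hb hu hbu
    exact Relation.EqvGen.trans _ _ _ huw (TraceEquiv.append_left _ [b] (ih hw hv'))

instance (x y : StN m) : Subsingleton (x ⟶ y) :=
  ⟨fun f g => Quotient.inductionOn₂ f g fun u v =>
    Quotient.sound (traceEquiv_of_stepsT_eq_some u.2 v.2)⟩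

theorem exists_stepT_eq_some_of_exists_true {s : Fin m → Bool} (hs : ∃ a, s a = true) :
    ∃ a t, stepT m s a = some t := by
  classical
  obtain ⟨a₀, ha₀⟩ := hs
  obtain ⟨a, ha, hmax⟩ := Finset.exists_max_image (Finset.univ.filter (s · = true))
    (fun x : Fin m => (x : ℕ)) ⟨a₀, by simpa using ha₀⟩
  refine ⟨a, _, stepT_eq_some_iff.2 ⟨by simpa using ha, fun h => ?_, fun _ => rfl⟩⟩
  by_contra hsucc
  have := hmax ⟨a + 1, h⟩ (by simpa using hsucc)
  simp at this

theorem exists_stepsT_eq_some_false (s : Fin m → Bool) :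
    ∃ l, stepsT m s l = some fun _ => false := by
  by_cases hs : ∃ a, s a = true
  · obtain ⟨a, t, hst⟩ := exists_stepT_eq_some_of_exists_true hs
    obtain ⟨l, hl⟩ := exists_stepsT_eq_some_false t
    exact ⟨a :: l, stepsT_cons_eq_some_iff.2 ⟨t, hst, hl⟩⟩
  · push Not at hs
    exact ⟨[], by simpa [stepsT, funext_iff] using hs⟩
termination_by (tokenWeight (fun x => m - x) s).toNat
decreasing_by
  have hdrop := tokenWeight_of_stepT (w := fun x => m - x) (by simp) hst
  have hnonneg : 0 ≤ tokenWeight (fun x => m - x) t :=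
    Finset.sum_nonneg fun x _ => by dsimp only; split_ifs <;> omega
  omega

theorem stepT_not_eq_some {s t : Fin m → Bool} {e : Fin m} (h : stepT m s e = some t) :
    stepT m (fun x => !t x) e = some fun x => !s x := by
  obtain ⟨he, hsucc, ht⟩ := stepT_eq_some_iff.1 h
  refine stepT_eq_some_iff.2 ⟨by simp [ht], fun h => by simp [ht], fun x => ?_⟩
  simp only [ht]
  split_ifs with hx hx'
  · simp [Fin.ext hx, he]
  · simp [show x = ⟨e + 1, by omega⟩ from Fin.ext hx', hsucc]
  · rfl

theorem stepsT_reverse_not_eq_some {s t : Fin m → Bool} {l : List (Fin m)}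
    (h : stepsT m s l = some t) : stepsT m (fun x => !t x) l.reverse = some fun x => !s x := by
  induction l generalizing s with
  | nil =>
    obtain rfl : s = t := by simpa [stepsT] using h
    rfl
  | cons a l ih =>
    obtain ⟨s', hs', hl⟩ := stepsT_cons_eq_some_iff.1 h
    rw [List.reverse_cons, stepsT_append, ih hl, Option.bind_some]
    exact stepsT_cons_eq_some_iff.2 ⟨_, stepT_not_eq_some hs', rfl⟩

theorem exists_stepsT_true_eq_some (t : Fin m → Bool) :
    ∃ l, stepsT m (fun _ => true) l = some t := by
  obtain ⟨l, hl⟩ := exists_stepsT_eq_some_false fun x => !t x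
  exact ⟨l.reverse, by simpa using stepsT_reverse_not_eq_some hl⟩

end PipelineNet

noncomputable def isTerminalAllFalse (m : ℕ) : IsTerminal (⟨fun _ => false⟩ : StN m) :=
  IsTerminal.ofUniqueHom
    (fun x => Quotient.mk _ ⟨_, (exists_stepsT_eq_some_false x.s).choose_spec⟩)
    fun _ _ => Subsingleton.elim _ _

noncomputable def isInitialAllTrue (m : ℕ) : IsInitial (⟨fun _ => true⟩ : StN m) :=
  IsInitial.ofUniqueHom
    (fun x => Quotient.mk _ ⟨_, (exists_stepsT_true_eq_some x.s).choose_spec⟩)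
    fun _ _ => Subsingleton.elim _ _

theorem directed_homology_of_Nn_general (n : ℕ)
    [HasProjectiveResolutions (StN (n - 1) ⥤ AddCommGrpCat.{0})]
    [HasProjectiveResolutions ((StN (n - 1))ᵒᵖ ⥤ AddCommGrpCat.{0})] :
    (∀ k, 0 < k → IsZero ((colim.leftDerived k).obj (Delta0 (n - 1)))) ∧
    Nonempty (colim.obj (Delta0 (n - 1)) ≅ AddCommGrpCat.of ℤ) ∧
    (∀ k, 0 < k → IsZero ((colim.leftDerived k).obj (Delta1 (n - 1)))) ∧
    Nonempty (colim.obj (Delta1 (n - 1)) ≅ AddCommGrpCat.of ℤ) := by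
  have h₀ := isTerminalAllFalse (n - 1)
  have h₁ := (isInitialAllTrue (n - 1)).op
  refine ⟨fun k hk => ?_, ⟨(colimIsoEvaluationOfIsTerminal h₀).app _⟩, fun k hk => ?_,
    ⟨(colimIsoEvaluationOfIsTerminal h₁).app _⟩⟩
  all_goals
    obtain ⟨k, rfl⟩ := Nat.exists_eq_add_one_of_ne_zero hk.ne'
  · exact isZero_colim_leftDerived_obj_of_isTerminal h₀ _ k
  · exact isZero_colim_leftDerived_obj_of_isTerminal h₁ _ k

/-- For the nets `N_n` (pipeline with `t₁` deleted, `m = n-1` places and events), the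
directed homology groups `H_k^ε(N_n) = colim_k Δ^εℤ` vanish for `k > 0` and are `ℤ` for
`k = 0`, for both `ε ∈ {0,1}`.  (`HasProjectiveResolutions` holds for these functor
categories; it is the standing assumption under which the derived colimits are defined.) -/
theorem directed_homology_of_Nn (n : ℕ) (hn : 2 ≤ n)
    [HasProjectiveResolutions (StN (n - 1) ⥤ AddCommGrpCat.{0})]
    [HasProjectiveResolutions ((StN (n - 1))ᵒᵖ ⥤ AddCommGrpCat.{0})] :
    (∀ k, 0 < k → IsZero ((colim.leftDerived k).obj (Delta0 (n - 1)))) ∧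
    Nonempty (colim.obj (Delta0 (n - 1)) ≅ AddCommGrpCat.of ℤ) ∧
    (∀ k, 0 < k → IsZero ((colim.leftDerived k).obj (Delta1 (n - 1)))) ∧
    Nonempty (colim.obj (Delta1 (n - 1)) ≅ AddCommGrpCat.of ℤ) :=
  directed_homology_of_Nn_general n
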